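/- arXiv:1305.7288 — 5 statements merged into one kernel-verified Lean document; each statement's English description precedes it below -/
import Mathlib

section
/- The Stokes groupoid structure on ℂ² given by s(z,u) = z, t(z,u) = exp(u z^{k−1}) z, and composition (z₂,u₂)·(z₁,u₁) = (z₁, u₂ exp((k−1)u₁z₁^{k−1}) + u₁) (defined when z₂ = t(z₁,u₁)) is associative, has identities (z,0), and satisfies the target compatibility t((z₂,u₂)·(z₁,u₁)) = t(z₂,u₂). -/
/-! With `n = k - 1`, everything rests on `(exp (u zⁿ) z)ⁿ = exp (n u zⁿ) zⁿ`: the `n`-th power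
of a target is again of the form `exp (·) zⁿ`. Substituting it for `z₂ⁿ` turns the exponent of
`t` of a composite into a sum, which gives target compatibility, and it makes the exponential
factor in a double composite split as a product, which gives associativity. -/

open Complex

namespace StokesGroupoid

variable (n : ℕ)

noncomputable def target (p : ℂ × ℂ) : ℂ := exp (p.2 * p.1 ^ n) * p.1

noncomputable def comp (p q : ℂ × ℂ) : ℂ × ℂ := (q.1, p.2 * exp (n * q.2 * q.1 ^ n) + q.2)

theorem target_pow (z u : ℂ) : target n (z, u) ^ n = exp (n * u * z ^ n) * z ^ n := by
  rw [target, mul_pow, ← exp_nat_mul, mul_assoc]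

theorem target_comp {p q : ℂ × ℂ} (h : p.1 = target n q) :
    target n (comp n p q) = target n p := by
  obtain ⟨z, u⟩ := q
  calc target n (comp n p (z, u))
      = exp (p.2 * target n (z, u) ^ n) * target n (z, u) := by
        rw [target_pow]
        simp only [target, comp]
        rw [add_mul, exp_add, mul_assoc p.2]
        ring
    _ = target n p := by rw [← h, target]

theorem comp_assoc (p : ℂ × ℂ) {q r : ℂ × ℂ} (h : q.1 = target n r) :
    comp n (comp n p q) r = comp n p (comp n q r) := by
  obtain ⟨z, u⟩ := r
  have hexp : (n : ℂ) * (q.2 * exp (n * u * z ^ n) + u) * z ^ n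
      = n * q.2 * q.1 ^ n + n * u * z ^ n := by
    rw [h, target_pow]; ring
  simp only [comp, hexp, exp_add]
  ext
  · rfl
  · ring

theorem id_comp (p : ℂ × ℂ) : comp n (target n p, 0) p = p := by
  simp [comp]

theorem comp_id (p : ℂ × ℂ) : comp n p (p.1, 0) = p := by
  simp [comp]

end StokesGroupoid

open StokesGroupoid in
/-- The Stokes groupoid `Sto_k` on `ℂ²`:
`s(z,u) = z`, `t(z,u) = exp(u z^{k-1}) z`, and composition
`(z₂,u₂)·(z₁,u₁) = (z₁, u₂ exp((k−1) u₁ z₁^{k-1}) + u₁)` (defined when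
`z₂ = t(z₁,u₁)`).  The composition is associative, `(z,0)` are identities, and
the target of a composite equals the target of the left factor. -/
theorem stokes_groupoid_axioms (k : ℕ) (hk : 1 ≤ k) :
    ∀ (t : ℂ × ℂ → ℂ), (t = fun p => Complex.exp (p.2 * p.1 ^ (k - 1)) * p.1) →
    ∀ (m : ℂ × ℂ → ℂ × ℂ → ℂ × ℂ),
      (m = fun p q =>
        (q.1, p.2 * Complex.exp (((k : ℂ) - 1) * q.2 * q.1 ^ (k - 1)) + q.2)) →
    -- target compatibility
    (∀ p q : ℂ × ℂ, p.1 = t q → t (m p q) = t p) ∧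
    -- associativity on composable triples
    (∀ p q r : ℂ × ℂ, p.1 = t q → q.1 = t r → m (m p q) r = m p (m q r)) ∧
    -- identity laws
    (∀ p : ℂ × ℂ, m (t p, 0) p = p ∧ m p (p.1, 0) = p) := by
  intro t ht m hm
  obtain ⟨n, rfl⟩ := Nat.exists_eq_add_of_le' hk
  have hcast : ((n + 1 : ℕ) : ℂ) - 1 = n := by push_cast; ring
  rw [Nat.add_sub_cancel] at ht
  simp only [hcast, Nat.add_sub_cancel] at hm
  change t = target n at ht
  change m = comp n at hm
  subst ht hm
  exact ⟨fun p q => target_comp n, fun p q r _ => comp_assoc n p,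
    fun p => ⟨id_comp n p, comp_id n p⟩⟩
end

section
/- The map E(z,u) = (z, (e^{u z^{k−1}} − 1)/z^{k−1}) (extended by E(0,u) = (0,u) when k ≥ 2, using the removable singularity) is a groupoid homomorphism from the Stokes groupoid Sto_k to the twisted pair groupoid Pair(ℂ, k·0): it intertwines the source and target maps and composition laws of the two groupoids. -/
open Complex

/-!
Put `a = z^{k-1}`. The second component of `E` is `expSlope a u`, the slope of `t ↦ e^{u t}`
between `0` and `a`, with the derivative `u` as its value at `a = 0`; in either case
`1 + expSlope a u * a = e^{u a}`. This single identity gives the target map and the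
nonvanishing of `1 + v z^{k-1}`. For composition, the source `e^{u a} z` of the second arrow
has `(e^{u a} z)^{k-1} = e^{(k-1) u a} a`, which is exactly the factor appearing in the
Stokes composition law, and the composition identity reduces to `e^{x + y} = e^x e^y`.
-/

noncomputable def expSlope (a u : ℂ) : ℂ :=
  if a = 0 then u else (exp (u * a) - 1) / a

theorem one_add_expSlope_mul (a u : ℂ) : 1 + expSlope a u * a = exp (u * a) := by
  unfold expSlope
  split_ifs with ha
  · simp [ha]
  · rw [div_mul_cancel₀ _ ha]
    ring

theorem expSlope_mul_add (n : ℕ) (a u v : ℂ) :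
    expSlope a (v * exp (u * a) ^ n + u) =
      expSlope (exp (u * a) ^ n * a) v * exp (u * a) ^ (n + 1) + expSlope a u := by
  by_cases ha : a = 0
  · simp [expSlope, ha]
  have hca : exp (u * a) ^ n * a ≠ 0 := mul_ne_zero (pow_ne_zero _ (exp_ne_zero _)) ha
  have hexp : exp ((v * exp (u * a) ^ n + u) * a) =
      exp (v * (exp (u * a) ^ n * a)) * exp (u * a) := by
    rw [← exp_add]
    ring_nf
  simp only [expSlope, if_neg ha, if_neg hca, hexp]
  field_simp
  ring

/-- The exponential map `E(z,u) = (z, (e^{u z^{k-1}} − 1)/z^{k-1})`, extended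
holomorphically over `z = 0` by `E(0,u) = (0,u)` when `k ≥ 2`, is a groupoid
homomorphism from the Stokes groupoid `Sto_k` to the twisted pair groupoid
`Pair(ℂ, k·0)`: it preserves sources and targets, lands in
`{(z,v) : 1 + v z^{k-1} ≠ 0}`, and intertwines the composition laws. -/
theorem exp_homomorphism_stokes_to_pair (k : ℕ) (hk : 1 ≤ k) :
    ∀ (E : ℂ × ℂ → ℂ × ℂ),
      (E = fun p => (p.1, if p.1 ^ (k - 1) = 0 then p.2
          else (Complex.exp (p.2 * p.1 ^ (k - 1)) - 1) / p.1 ^ (k - 1))) →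
    ∀ (tSto : ℂ × ℂ → ℂ), (tSto = fun p => Complex.exp (p.2 * p.1 ^ (k - 1)) * p.1) →
    ∀ (mSto : ℂ × ℂ → ℂ × ℂ → ℂ × ℂ),
      (mSto = fun p q =>
        (q.1, p.2 * Complex.exp (((k : ℂ) - 1) * q.2 * q.1 ^ (k - 1)) + q.2)) →
    ∀ (tPair : ℂ × ℂ → ℂ), (tPair = fun p => (1 + p.2 * p.1 ^ (k - 1)) * p.1) →
    ∀ (mPair : ℂ × ℂ → ℂ × ℂ → ℂ × ℂ),
      (mPair = fun p q => (q.1, p.2 * (1 + q.2 * q.1 ^ (k - 1)) ^ k + q.2)) →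
    -- E preserves sources and targets and lands in Pair(ℂ, k·0)
    (∀ p : ℂ × ℂ, (E p).1 = p.1 ∧ tPair (E p) = tSto p ∧
        1 + (E p).2 * (E p).1 ^ (k - 1) ≠ 0) ∧
    -- E intertwines the composition laws
    (∀ p q : ℂ × ℂ, p.1 = tSto q → E (mSto p q) = mPair (E p) (E q)) := by
  intro E hE tSto htS mSto hmS tPair htP mPair hmP
  obtain ⟨n, rfl⟩ : ∃ n, k = n + 1 := ⟨k - 1, by omega⟩
  replace hE : E = fun p => (p.1, expSlope (p.1 ^ n) p.2) := hE
  have hn : ((n + 1 : ℕ) : ℂ) - 1 = n := by push_cast; ring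
  subst hE htS hmS htP hmP
  simp only [Nat.add_sub_cancel, hn, true_and]
  refine ⟨fun p => ⟨?_, ?_⟩, fun p q hpq => ?_⟩
  · rw [one_add_expSlope_mul]
  · rw [one_add_expSlope_mul]
    exact exp_ne_zero _
  · rw [hpq, mul_pow, one_add_expSlope_mul, mul_assoc, exp_nat_mul]
    exact congrArg _ (expSlope_mul_add n _ _ _)
end

section
/- For k ≥ 2, the function S_k(z,u) = (1 − e^{−u(k−1)z^{k−1}})/((k−1)z^{k−1}) (extended across z = 0 by S_k(0,u) = u) is additive on the Stokes groupoid Sto_k: whenever z₂ = e^{u₁z₁^{k−1}} z₁, one has S_k(z₁, u₂e^{(k−1)u₁z₁^{k−1}} + u₁) = S_k(z₂,u₂) + S_k(z₁,u₁). -/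
/-!
With `x = (k - 1) z^{k-1}` one has `S_k(z, u) = ∫₀ᵘ e^{-tx} dt`, and the target of the arrow
`(z, u)` has parameter `e^{ux} x`. Additivity is then the substitution `t = u₁ + s e^{u₁x}`
splitting `∫₀^{u₁ + u₂ e^{u₁x}}` at `u₁`; algebraically it is the identity
`1 - e^{-(u₂ e^{u₁x} + u₁)x} = e^{-u₁x}(1 - e^{-u₂ e^{u₁x} x}) + (1 - e^{-u₁x})`.
-/

open Complex

/-- `expNegIntegral x u = ∫₀ᵘ e^{-tx} dt`. -/
noncomputable def expNegIntegral (x u : ℂ) : ℂ :=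
  if x = 0 then u else (1 - exp (-u * x)) / x

theorem expNegIntegral_add (x u₁ u₂ : ℂ) :
    expNegIntegral x (u₂ * exp (u₁ * x) + u₁) =
      expNegIntegral (exp (u₁ * x) * x) u₂ + expNegIntegral x u₁ := by
  by_cases hx : x = 0
  · simp [expNegIntegral, hx]
  have hEx : exp (u₁ * x) * x ≠ 0 := mul_ne_zero (exp_ne_zero _) hx
  have hinv : exp (-u₁ * x) = (exp (u₁ * x))⁻¹ := by rw [← exp_neg, neg_mul]
  have hsplit : exp (-(u₂ * exp (u₁ * x) + u₁) * x) =
      exp (-u₂ * (exp (u₁ * x) * x)) * exp (-u₁ * x) := by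
    rw [← exp_add]; ring_nf
  simp only [expNegIntegral, if_neg hx, if_neg hEx, hsplit, hinv]
  field_simp [exp_ne_zero]
  ring

theorem expNegIntegral_natCast_mul_pow {n : ℕ} (hn : n ≠ 0) (z u : ℂ) :
    expNegIntegral (n * z ^ n) u =
      if z = 0 then u else (1 - exp (-u * n * z ^ n)) / (n * z ^ n) := by
  have hzero : (n : ℂ) * z ^ n = 0 ↔ z = 0 := by simp [hn]
  simp only [expNegIntegral, hzero, mul_assoc]

/-- For `k ≥ 2`, the function
`S_k(z,u) = (1 − e^{−u(k−1)z^{k−1}})/((k−1)z^{k−1})`, extended across `z = 0`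
by `S_k(0,u) = u`, is additive on the Stokes groupoid `Sto_k`: whenever
`z₂ = e^{u₁ z₁^{k−1}} z₁` (i.e. the arrows `(z₂,u₂)` and `(z₁,u₁)` are
composable) one has
`S_k(z₁, u₂ e^{(k−1)u₁z₁^{k−1}} + u₁) = S_k(z₂,u₂) + S_k(z₁,u₁)`. -/
theorem stokes_additive_function (k : ℕ) (hk : 2 ≤ k) :
    ∀ (S : ℂ × ℂ → ℂ),
      (S = fun p => if p.1 = 0 then p.2
        else (1 - Complex.exp (-p.2 * ((k : ℂ) - 1) * p.1 ^ (k - 1))) /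
          (((k : ℂ) - 1) * p.1 ^ (k - 1))) →
    ∀ z₁ u₁ z₂ u₂ : ℂ, z₂ = Complex.exp (u₁ * z₁ ^ (k - 1)) * z₁ →
      S (z₁, u₂ * Complex.exp (((k : ℂ) - 1) * u₁ * z₁ ^ (k - 1)) + u₁) =
        S (z₂, u₂) + S (z₁, u₁) := by
  rintro S rfl z₁ u₁ z₂ u₂ rfl
  obtain ⟨n, rfl⟩ : ∃ n, k = n + 1 := ⟨k - 1, by omega⟩
  have hn : n ≠ 0 := by omega
  simp only [Nat.add_sub_cancel, Nat.cast_add, Nat.cast_one, add_sub_cancel_right,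
    ← expNegIntegral_natCast_mul_pow hn]
  have htarget : (n : ℂ) * (exp (u₁ * z₁ ^ n) * z₁) ^ n =
      exp (u₁ * (n * z₁ ^ n)) * (n * z₁ ^ n) := by
    rw [mul_pow, ← exp_nat_mul]; ring_nf
  rw [htarget, ← expNegIntegral_add]
  ring_nf
end

section
/- For k ≥ 2, the function S'_k(z,u) = (1 − (1 + uz^{k−1})^{−(k−1)})/((k−1)z^{k−1}) (extended by S'_k(0,u) = u) is additive on the twisted pair groupoid Pair(ℂ,k·0): whenever z₂ = (1 + u₁z₁^{k−1})z₁, one has S'_k(z₁, u₂(1 + u₁z₁^{k−1})^k + u₁) = S'_k(z₂,u₂) + S'_k(z₁,u₁). -/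
/-!
Write `m = k - 1` and `τ(z, u) = 1 + u z^m`, so that the target of `(z, u)` is `τ(z, u) z`.
The factor `τ` is multiplicative along composable pairs:
`τ(z₁, u₂ τ₁^{m+1} + u₁) = τ(z₁, u₁) · τ(z₂, u₂)`. Away from `z = 0`, the function is
`(1 - τ^{-m}) / (m z^m)`, and since `z₂^m = τ₁^m z₁^m`, additivity reduces to
`1 - τ₁^{-m} τ₂^{-m} = τ₁^{-m} (1 - τ₂^{-m}) + (1 - τ₁^{-m})`.
-/

namespace TwistedPair

variable {K : Type*} [Field K]

def twist (m : ℕ) (z u : K) : K := 1 + u * z ^ m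

theorem twist_comp (m : ℕ) (z u₁ u₂ : K) :
    twist m z (u₂ * twist m z u₁ ^ (m + 1) + u₁) =
      twist m z u₁ * twist m (twist m z u₁ * z) u₂ := by
  simp only [twist, mul_pow]
  ring

variable [DecidableEq K]

noncomputable def additiveFun (m : ℕ) (p : K × K) : K :=
  if p.1 = 0 then p.2 else (1 - (twist m p.1 p.2 ^ m)⁻¹) / (m * p.1 ^ m)

theorem additiveFun_comp {m : ℕ} (hm : m ≠ 0) {z u₁ : K} (h : twist m z u₁ ≠ 0) (u₂ : K) :
    additiveFun m (z, u₂ * twist m z u₁ ^ (m + 1) + u₁) =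
      additiveFun m (twist m z u₁ * z, u₂) + additiveFun m (z, u₁) := by
  by_cases hz : z = 0
  · simp [additiveFun, twist, hz, zero_pow hm]
  · simp only [additiveFun, if_neg hz, if_neg (mul_ne_zero h hz), twist_comp, mul_pow,
      div_eq_mul_inv, mul_inv]
    ring

end TwistedPair

/-- For `k ≥ 2`, the function
`S'_k(z,u) = (1 − (1 + u z^{k−1})^{−(k−1)})/((k−1)z^{k−1})`, extended across
`z = 0` by `S'_k(0,u) = u`, is additive on the twisted pair groupoid
`Pair(ℂ, k·0)`: for arrows `(z₁,u₁)`, `(z₂,u₂)` of the groupoid (so that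
`1 + uᵢ zᵢ^{k−1} ≠ 0`) which are composable, i.e. `z₂ = (1 + u₁z₁^{k−1})z₁`,
one has `S'_k(z₁, u₂(1 + u₁z₁^{k−1})^k + u₁) = S'_k(z₂,u₂) + S'_k(z₁,u₁)`. -/
theorem pair_additive_function (k : ℕ) (hk : 2 ≤ k) :
    ∀ (S' : ℂ × ℂ → ℂ),
      (S' = fun p => if p.1 = 0 then p.2
        else (1 - ((1 + p.2 * p.1 ^ (k - 1)) ^ (k - 1))⁻¹) /
          (((k : ℂ) - 1) * p.1 ^ (k - 1))) →
    ∀ z₁ u₁ z₂ u₂ : ℂ,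
      1 + u₁ * z₁ ^ (k - 1) ≠ 0 → 1 + u₂ * z₂ ^ (k - 1) ≠ 0 →
      z₂ = (1 + u₁ * z₁ ^ (k - 1)) * z₁ →
      S' (z₁, u₂ * (1 + u₁ * z₁ ^ (k - 1)) ^ k + u₁) =
        S' (z₂, u₂) + S' (z₁, u₁) := by
  intro S' hS z₁ u₁ z₂ u₂ h₁ _ hz
  obtain ⟨m, rfl⟩ : ∃ m, k = m + 1 := ⟨k - 1, by omega⟩
  rw [Nat.add_sub_cancel] at h₁ hS hz
  have hS' : S' = TwistedPair.additiveFun m := by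
    subst hS
    funext p
    simp [TwistedPair.additiveFun, TwistedPair.twist]
  subst hS' hz
  exact TwistedPair.additiveFun_comp (by omega) h₁ u₂
end

section
/- Let f̂(z) = Σ_{n≥0} n! z^{n+1} ∈ ℂ[[z]]. In the ring ℂ[[z,μ]] of formal power series in two variables, with t = z(1−zμ)^{−1} = Σ_{j≥0} z^{j+1}μ^j, the series t*f̂ − e^μ · s*f̂ (where s*f̂ = f̂(z) and t*f̂ = f̂(t) as formal substitution) equals −Σ_{i≥0}Σ_{j≥0} z^{i+1}μ^{i+j+1}/((i+1)(i+2)⋯(i+j+1)); in particular this double series converges on a neighborhood of (0,0). -/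
/-! Since `t^{n+1} = z^{n+1} (1 - zμ)^{-(n+1)}` has coefficient `C(n+j, n)` at
`z^{n+1+j} μ^j`, the coefficient of `f̂(t)` at `z^{i+1} μ^j` is `i!/j!` for `j ≤ i` and `0` for
`j > i`, while that of `e^μ f̂(z)` is `i!/j!` for every `j`. The difference is therefore supported
on `j > i`, where `i!/j! = 1/((i+1)⋯j)`. These coefficients have modulus at most one, so the
double series is dominated by a product of two geometric series. -/

open MvPowerSeries Finset
open scoped Nat

namespace PowerSeries

theorem subst_invOneSubPow {K σ : Type*} [Field K] {a : MvPowerSeries σ K}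
    (ha : MvPowerSeries.constantCoeff a = 0) (d : ℕ) :
    subst a (invOneSubPow K d : K⟦X⟧) = (1 - a)⁻¹ ^ d := by
  have hsubst : HasSubst a := HasSubst.of_constantCoeff_zero ha
  have h := congrArg (substAlgHom hsubst) (invOneSubPow K d).val_inv
  rw [invOneSubPow_inv_eq_one_sub_pow, map_mul, map_pow, map_sub, map_one,
    coe_substAlgHom, subst_X hsubst] at h
  refine left_inv_eq_right_inv h ?_
  rw [← mul_pow, MvPowerSeries.mul_inv_cancel _ (by simp [ha]), one_pow]

theorem coeff_subst_X_zero_mul_X_one {R : Type*} [CommRing R] (f : R⟦X⟧) (e : Fin 2 →₀ ℕ) :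
    MvPowerSeries.coeff e
        (subst (MvPowerSeries.X 0 * MvPowerSeries.X 1 : MvPowerSeries (Fin 2) R) f) =
      if e 0 = e 1 then coeff (e 0) f else 0 := by
  have hpow (k : ℕ) : (MvPowerSeries.X 0 * MvPowerSeries.X 1 : MvPowerSeries (Fin 2) R) ^ k =
      MvPowerSeries.monomial (Finsupp.single 0 k + Finsupp.single 1 k) 1 := by
    rw [mul_pow, MvPowerSeries.X_pow_eq, MvPowerSeries.X_pow_eq,
      MvPowerSeries.monomial_mul_monomial, one_mul]
  have he (k : ℕ) : e = Finsupp.single 0 k + Finsupp.single 1 k ↔ e 0 = k ∧ e 1 = k := by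
    simp [Finsupp.ext_iff, Fin.forall_fin_two]
  rw [coeff_subst (HasSubst.of_constantCoeff_zero (by simp)), finsum_eq_single _ (e 0)] <;>
    simp only [hpow, MvPowerSeries.coeff_monomial, he, smul_eq_mul] <;> grind

end PowerSeries

theorem MvPowerSeries.coeff_mul_of_supported_on_axes {R : Type*} [CommSemiring R]
    {a b : MvPowerSeries (Fin 2) R} (ha : ∀ d : Fin 2 →₀ ℕ, d 0 ≠ 0 → coeff d a = 0)
    (hb : ∀ d : Fin 2 →₀ ℕ, d 1 ≠ 0 → coeff d b = 0) (d : Fin 2 →₀ ℕ) :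
    coeff d (a * b) = coeff (Finsupp.single 1 (d 1)) a * coeff (Finsupp.single 0 (d 0)) b := by
  have hd : Finsupp.single 1 (d 1) + Finsupp.single 0 (d 0) = d := by
    ext i
    fin_cases i <;> simp
  rw [coeff_mul, sum_eq_single_of_mem (Finsupp.single 1 (d 1), Finsupp.single 0 (d 0))
    (mem_antidiagonal.mpr hd)]
  rintro ⟨u, v⟩ huv hne
  by_cases hu : u 0 = 0
  · by_cases hv : v 1 = 0
    · refine absurd ?_ hne
      have h0 := congrArg (· 0) (mem_antidiagonal.mp huv)
      have h1 := congrArg (· 1) (mem_antidiagonal.mp huv)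
      simp only [Finsupp.add_apply] at h0 h1
      ext i <;> fin_cases i <;> simp <;> omega
    · rw [hb v hv, mul_zero]
  · rw [ha u hu, zero_mul]

theorem factorial_div_factorial_eq_inv_prod_Icc {K : Type*} [Field K] [CharZero K] {a b : ℕ}
    (h : a ≤ b) : (a ! : K) / b ! = (∏ r ∈ Icc (a + 1) b, (r : K))⁻¹ := by
  have hprod : a ! * ∏ r ∈ Icc (a + 1) b, r = b ! := by
    rw [← Ico_add_one_right_eq_Icc, ← prod_Ico_id_eq_factorial, ← prod_Ico_id_eq_factorial,
      prod_Ico_consecutive _ (by omega) (by omega)]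
  rw [← hprod, Nat.cast_mul, Nat.cast_prod,
    div_mul_cancel_left₀ (Nat.cast_ne_zero.mpr a.factorial_ne_zero)]

theorem norm_inv_prod_Icc_le_one {a b : ℕ} (ha : 1 ≤ a) :
    ‖(∏ r ∈ Icc a b, (r : ℂ))⁻¹‖ ≤ 1 := by
  rw [norm_inv, ← Nat.cast_prod, Complex.norm_natCast]
  exact inv_le_one_of_one_le₀ (Nat.one_le_cast.mpr (one_le_prod' fun r hr => by grind))

theorem summable_pow_mul_pow_mul_of_norm_le_one {𝕜 : Type*} [NormedField 𝕜] [CompleteSpace 𝕜]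
    {z μ : 𝕜} (hzμ : ‖z * μ‖ < 1) (hμ : ‖μ‖ < 1) {c : ℕ × ℕ → 𝕜} (hc : ∀ p, ‖c p‖ ≤ 1) :
    Summable fun p : ℕ × ℕ => z ^ (p.1 + 1) * μ ^ (p.1 + p.2 + 1) * c p := by
  have hgeom : Summable fun p : ℕ × ℕ => ‖z * μ‖ ^ (p.1 + 1) * ‖μ‖ ^ p.2 :=
    ((summable_geometric_of_lt_one (norm_nonneg _) hzμ).mul_left ‖z * μ‖).mul_of_nonneg
      (summable_geometric_of_lt_one (norm_nonneg _) hμ) (fun _ => by positivity)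
      (fun _ => by positivity) |>.congr fun p => by ring
  refine hgeom.of_norm_bounded fun p => ?_
  calc ‖z ^ (p.1 + 1) * μ ^ (p.1 + p.2 + 1) * c p‖
      = ‖z * μ‖ ^ (p.1 + 1) * ‖μ‖ ^ p.2 * ‖c p‖ := by
        simp only [norm_mul, norm_pow]
        ring
    _ ≤ ‖z * μ‖ ^ (p.1 + 1) * ‖μ‖ ^ p.2 := mul_le_of_le_one_right (by positivity) (hc p)

namespace EulerSeries

variable {K : Type*} [Field K]

noncomputable def t : MvPowerSeries (Fin 2) K := X 0 * (1 - X 0 * X 1)⁻¹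

theorem coeff_t_pow (n : ℕ) (d : Fin 2 →₀ ℕ) :
    coeff d ((t : MvPowerSeries (Fin 2) K) ^ (n + 1)) =
      if d 0 = n + 1 + d 1 then ((n + d 1).choose n : K) else 0 := by
  rw [t, mul_pow, ← PowerSeries.subst_invOneSubPow (by simp), X_pow_eq, coeff_monomial_mul,
    PowerSeries.coeff_subst_X_zero_mul_X_one, PowerSeries.invOneSubPow_val_succ_eq_mk_add_choose,
    PowerSeries.coeff_mk]
  simp only [Finsupp.single_le_iff, Finsupp.tsub_apply, Finsupp.single_eq_same, one_mul]
  rw [Finsupp.single_eq_of_ne (by decide), Nat.sub_zero]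
  split_ifs <;> grind

theorem sum_factorial_mul_coeff_t_pow [CharZero K] (d : Fin 2 →₀ ℕ) :
    ∑ n ∈ range (d 0 + 1), (n ! : K) * coeff d ((t : MvPowerSeries (Fin 2) K) ^ (n + 1)) =
      if d 1 < d 0 then ((d 0 - 1)! : K) / (d 1)! else 0 := by
  simp only [coeff_t_pow, mul_ite, mul_zero]
  split_ifs with h
  · rw [sum_eq_single_of_mem (d 0 - d 1 - 1) (mem_range.mpr (by omega))
      (fun n _ hn => if_neg (by omega)), if_pos (by omega), Nat.cast_add_choose,
      show d 0 - d 1 - 1 + d 1 = d 0 - 1 by omega, ← mul_div_assoc]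
    exact mul_div_mul_left _ _
      (Nat.cast_ne_zero.mpr (Nat.factorial_ne_zero _) : ((d 0 - d 1 - 1)! : K) ≠ 0)
  · exact sum_eq_zero fun n _ => if_neg (by omega)

end EulerSeries

open EulerSeries in
/-- In `ℂ[[z,μ]]` (with `z = X 0`, `μ = X 1`), let `f̂(z) = Σ n! z^{n+1}`,
let `t = z(1−zμ)⁻¹`, let `t*f̂ = f̂(t)` be the formal substitution (defined
coefficient-wise; the sum over `n` is finite in each coefficient since `t` has
`z`-order one), and let `e^μ = Σ μ^m/m!`.  Then
`t*f̂ − e^μ · s*f̂ = −Σ_{i,j≥0} z^{i+1} μ^{i+j+1} / ((i+1)(i+2)⋯(i+j+1))`,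
and in particular this double series converges on a neighbourhood of `(0,0)`
(e.g. for `‖z‖, ‖μ‖ < 1/2`). -/
theorem resummation_of_euler_series :
    ∀ T Eμ fz fT RHS : MvPowerSeries (Fin 2) ℂ,
      (T = X 0 * (1 - X 0 * X 1)⁻¹) →
      (∀ d : Fin 2 →₀ ℕ, coeff d Eμ =
        if d 0 = 0 then (((d 1).factorial : ℕ) : ℂ)⁻¹ else 0) →
      (∀ d : Fin 2 →₀ ℕ, coeff d fz =
        if d 1 = 0 ∧ 1 ≤ d 0 then (((d 0 - 1).factorial : ℕ) : ℂ) else 0) →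
      (∀ d : Fin 2 →₀ ℕ, coeff d fT =
        ∑ n ∈ Finset.range (d 0 + 1), ((n.factorial : ℕ) : ℂ) * coeff d (T ^ (n + 1))) →
      (∀ d : Fin 2 →₀ ℕ, coeff d RHS =
        if 1 ≤ d 0 ∧ d 0 ≤ d 1 then -(∏ r ∈ Finset.Icc (d 0) (d 1), (r : ℂ))⁻¹ else 0) →
      (fT - Eμ * fz = RHS) ∧
      (∀ z μ : ℂ, ‖z‖ < 1 / 2 → ‖μ‖ < 1 / 2 →
        Summable fun p : ℕ × ℕ =>
          z ^ (p.1 + 1) * μ ^ (p.1 + p.2 + 1) *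
            (∏ r ∈ Finset.Icc (p.1 + 1) (p.1 + p.2 + 1), (r : ℂ))⁻¹) := by
  intro T Eμ fz fT RHS hT hE hf hfT hR
  obtain rfl : T = t := hT
  refine ⟨?_, fun z μ hz hμ => ?_⟩
  · ext d
    have hEf : coeff d (Eμ * fz) = if 1 ≤ d 0 then ((d 0 - 1)! : ℂ) / (d 1)! else 0 := by
      rw [coeff_mul_of_supported_on_axes (fun e he => by rw [hE, if_neg he])
        (fun e he => by rw [hf, if_neg (by tauto)]), hE, hf]
      simp only [Finsupp.single_eq_same, Finsupp.single_eq_of_ne, ne_eq, zero_ne_one, one_ne_zero,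
        not_false_eq_true, if_true, true_and, mul_ite, mul_zero, div_eq_inv_mul]
    rw [map_sub, hfT, sum_factorial_mul_coeff_t_pow, hEf, hR]
    by_cases hle : 1 ≤ d 0 ∧ d 0 ≤ d 1
    · rw [if_neg (by omega), if_pos hle.1, if_pos hle, zero_sub,
        factorial_div_factorial_eq_inv_prod_Icc (by omega), Nat.sub_add_cancel hle.1]
    · rw [if_neg hle]
      by_cases hlt : d 1 < d 0
      · rw [if_pos hlt, if_pos (by omega), sub_self]
      · rw [if_neg hlt, if_neg (by omega), sub_zero]
  · refine summable_pow_mul_pow_mul_of_norm_le_one ?_ (by linarith)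
      fun p => norm_inv_prod_Icc_le_one (by omega)
    rw [norm_mul]
    nlinarith [norm_nonneg z, norm_nonneg μ]
end
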